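/- arXiv:1011.3242 — 3 statements merged into one kernel-verified Lean document; each statement's English description precedes it below -/
import Mathlib

section
/- Let Ω₁, …, Ωₙ be nonempty closed convex subsets of ℝˢ and let Ω be an affine subspace of ℝˢ parallel to a nonzero linear subspace L (i.e., Ω = a + L for some a), with Ωᵢ ∩ Ω = ∅ for all i. Given x̄ ∈ Ω, set aᵢ(x̄) = (x̄ − Π(x̄;Ωᵢ))/d(x̄;Ωᵢ). Then x̄ is an optimal solution of the generalized Heron problem (D(x̄) ≤ D(x) for all x ∈ Ω, D(x) = ∑_{i=1}^n d(x;Ωᵢ)) if and only if ∑_{i=1}^n cos(aᵢ(x̄), u) = 0 for every u ∈ L \ {0}. -/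
open Metric Finset
open scoped RealInnerProductSpace

/-!
Near a point `x̄` outside a closed convex set `K` with nearest point `p`, the distance function
`d(·; K)` is squeezed between the affine function `d(x̄; K) + ⟪a, · - x̄⟫`, where
`a = (x̄ - p) / d(x̄; K)` is a unit vector (the projection inequality makes it a subgradient), and
the same function plus `‖· - x̄‖² / (2 d(x̄; K))`. Summing over `i`, the Heron objective `D` has the
same two-sided bounds with `g = ∑ aᵢ`, so along a direction `u` of `L` the function
`t ↦ D(x̄ + t u) - D(x̄)` lies between `t ⟪g, u⟫` and `t ⟪g, u⟫ + C t²`. Hence `x̄` minimizes `D`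
on `x̄ + L` iff `g ⟂ L`, and `∑ cos(aᵢ, u) = ⟪g, u⟫ / ‖u‖` because the `aᵢ` are unit vectors.
-/

theorem eq_zero_of_forall_nonneg_mul_add_sq {b c : ℝ} (h : ∀ t : ℝ, 0 ≤ t * b + t ^ 2 * c) :
    b = 0 := by
  have hdisc := discrim_le_zero (a := c) (b := b) (c := 0) fun t => by linarith [h t]
  rw [discrim, mul_zero, sub_zero] at hdisc
  exact pow_eq_zero_iff two_ne_zero |>.mp (le_antisymm hdisc (sq_nonneg b))

theorem forall_mem_image_add_iff {R M : Type*} [Ring R] [AddCommGroup M] [Module R M]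
    {L : Submodule R M} {a x : M} {P : M → Prop} (hx : x ∈ (fun u => a + u) '' (L : Set M)) :
    (∀ y ∈ (fun u => a + u) '' (L : Set M), P y) ↔ ∀ v ∈ L, P (x + v) := by
  obtain ⟨l, hl, rfl⟩ := hx
  refine ⟨fun h v hv => h _ ⟨l + v, L.add_mem hl hv, (add_assoc _ _ _).symm⟩, ?_⟩
  rintro h _ ⟨m, hm, rfl⟩
  simpa using h (m - l) (L.sub_mem hm hl)

section InnerProductSpace

variable {E : Type*} [NormedAddCommGroup E] [InnerProductSpace ℝ E]

theorem norm_mul_norm_add_le (c v : E) : ‖c‖ * ‖c + v‖ ≤ ‖c‖ ^ 2 + ⟪c, v⟫ + ‖v‖ ^ 2 / 2 := by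
  nlinarith [norm_add_sq_real c v, sq_nonneg (‖c‖ - ‖c + v‖)]

variable {K : Set E} {x p : E}

theorem infDist_add_le (hp : p ∈ K) (hpx : dist x p = infDist x K) (hd : 0 < infDist x K)
    (v : E) :
    infDist (x + v) K ≤
      infDist x K + ⟪(infDist x K)⁻¹ • (x - p), v⟫ + (2 * infDist x K)⁻¹ * ‖v‖ ^ 2 := by
  set d := infDist x K
  have hnorm : ‖x - p‖ = d := by rw [← dist_eq_norm, hpx]
  have hdist : infDist (x + v) K ≤ ‖x - p + v‖ := by
    simpa only [dist_eq_norm, sub_add_eq_add_sub] using infDist_le_dist_of_mem (x := x + v) hp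
  have hmul := norm_mul_norm_add_le (x - p) v
  rw [hnorm] at hmul
  calc infDist (x + v) K ≤ ‖x - p + v‖ := hdist
    _ ≤ (d ^ 2 + ⟪x - p, v⟫ + ‖v‖ ^ 2 / 2) / d := by rw [le_div_iff₀' hd]; exact hmul
    _ = d + ⟪d⁻¹ • (x - p), v⟫ + (2 * d)⁻¹ * ‖v‖ ^ 2 := by
      rw [real_inner_smul_left]; field_simp

theorem le_infDist_add (hK : Convex ℝ K) (hp : p ∈ K) (hpx : dist x p = infDist x K) (v : E) :
    infDist x K + ⟪(infDist x K)⁻¹ • (x - p), v⟫ ≤ infDist (x + v) K := by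
  have hproj : ∀ q ∈ K, ⟪x - p, q - p⟫ ≤ 0 := by
    refine (norm_eq_iInf_iff_real_inner_le_zero hK hp).mp ?_
    simp only [← dist_eq_norm, hpx, infDist_eq_iInf]
  have hd₀ : 0 ≤ infDist x K := infDist_nonneg
  generalize infDist x K = d at hpx hd₀ ⊢
  rcases hd₀.eq_or_lt with rfl | hd
  · simpa only [inv_zero, zero_smul, inner_zero_left, add_zero] using infDist_nonneg
  have hnorm : ‖x - p‖ = d := by rw [← dist_eq_norm, hpx]
  -- `K` lies in the half-space `⟪x - p, · - p⟫ ≤ 0` by the projection inequality.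
  have hbound : ⟪x - p, x + v - p⟫ ≤ d * infDist (x + v) K := by
    rw [mul_comm, ← div_le_iff₀ hd, le_infDist ⟨p, hp⟩]
    intro q hq
    rw [div_le_iff₀ hd, dist_eq_norm, ← hnorm, mul_comm]
    calc ⟪x - p, x + v - p⟫ = ⟪x - p, x + v - q⟫ + ⟪x - p, q - p⟫ := by
          rw [← inner_add_right, sub_add_sub_cancel]
      _ ≤ ‖x - p‖ * ‖x + v - q‖ + 0 := add_le_add (real_inner_le_norm _ _) (hproj q hq)
      _ = ‖x - p‖ * ‖x + v - q‖ := add_zero _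
  have hsplit : ⟪x - p, x + v - p⟫ = d ^ 2 + ⟪x - p, v⟫ := by
    rw [add_sub_right_comm, inner_add_right, real_inner_self_eq_norm_sq, hnorm]
  rw [hsplit] at hbound
  rw [real_inner_smul_left]
  calc d + d⁻¹ * ⟪x - p, v⟫ = (d ^ 2 + ⟪x - p, v⟫) / d := by field_simp
    _ ≤ infDist (x + v) K := by rw [div_le_iff₀' hd]; exact hbound

theorem norm_inv_infDist_smul_sub (hpx : dist x p = infDist x K) (hd : 0 < infDist x K) :
    ‖(infDist x K)⁻¹ • (x - p)‖ = 1 := by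
  rw [norm_smul, ← dist_eq_norm, hpx, norm_inv, Real.norm_of_nonneg hd.le, inv_mul_cancel₀ hd.ne']

theorem sum_mem_orthogonal_iff_sum_cos_eq_zero {ι : Type*} [Fintype ι] {a : ι → E}
    (ha : ∀ i, ‖a i‖ = 1) (L : Submodule ℝ E) :
    ∑ i, a i ∈ Lᗮ ↔ ∀ u ∈ L, u ≠ 0 → ∑ i, ⟪a i, u⟫ / (‖a i‖ * ‖u‖) = 0 := by
  simp only [ha, one_mul, ← Finset.sum_div, ← sum_inner, Submodule.mem_orthogonal']
  refine ⟨fun h u hu _ => by rw [h u hu, zero_div], fun h u hu => ?_⟩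
  rcases eq_or_ne u 0 with rfl | hu0
  · exact inner_zero_right _
  · exact (div_eq_zero_iff.mp (h u hu hu0)).resolve_right (norm_ne_zero_iff.mpr hu0)

theorem forall_le_add_iff_mem_orthogonal {f : E → ℝ} {x g : E} {C : ℝ} (L : Submodule ℝ E)
    (hlower : ∀ v, f x + ⟪g, v⟫ ≤ f (x + v))
    (hupper : ∀ v, f (x + v) ≤ f x + ⟪g, v⟫ + C * ‖v‖ ^ 2) :
    (∀ v ∈ L, f x ≤ f (x + v)) ↔ g ∈ Lᗮ := by
  rw [Submodule.mem_orthogonal']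
  refine ⟨fun hmin u hu => ?_, fun hg v hv => by simpa [hg v hv] using hlower v⟩
  refine eq_zero_of_forall_nonneg_mul_add_sq (c := C * ‖u‖ ^ 2) fun t => ?_
  have hle := (hmin _ (L.smul_mem t hu)).trans (hupper (t • u))
  rw [real_inner_smul_right, norm_smul, mul_pow, Real.norm_eq_abs, sq_abs] at hle
  linarith

end InnerProductSpace

theorem heron_optimal_iff_cos_affine_general {s n : ℕ}
    (Ω : Set (EuclideanSpace ℝ (Fin s))) (Ωs : Fin n → Set (EuclideanSpace ℝ (Fin s)))
    (hcl : ∀ i, IsClosed (Ωs i)) (hcv : ∀ i, Convex ℝ (Ωs i))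
    (L : Submodule ℝ (EuclideanSpace ℝ (Fin s)))
    (av : EuclideanSpace ℝ (Fin s))
    (hΩ : Ω = (fun u => av + u) '' (L : Set (EuclideanSpace ℝ (Fin s))))
    (hdisj : ∀ i, Ωs i ∩ Ω = ∅)
    (xbar : EuclideanSpace ℝ (Fin s)) (hxbar : xbar ∈ Ω)
    (p : Fin n → EuclideanSpace ℝ (Fin s))
    (hp : ∀ i, p i ∈ Ωs i ∧ dist xbar (p i) = Metric.infDist xbar (Ωs i))
    (a : Fin n → EuclideanSpace ℝ (Fin s))
    (ha : ∀ i, a i = (Metric.infDist xbar (Ωs i))⁻¹ • (xbar - p i)) :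
    (∀ x ∈ Ω, ∑ i, Metric.infDist xbar (Ωs i) ≤ ∑ i, Metric.infDist x (Ωs i)) ↔
      (∀ u ∈ L, u ≠ 0 → ∑ i, (inner ℝ (a i) u : ℝ) / (‖a i‖ * ‖u‖) = 0) := by
  subst hΩ
  have hd : ∀ i, 0 < infDist xbar (Ωs i) := fun i =>
    ((hcl i).notMem_iff_infDist_pos ⟨p i, (hp i).1⟩).mp fun hx =>
      Set.eq_empty_iff_forall_notMem.mp (hdisj i) xbar ⟨hx, hxbar⟩
  have hnorm : ∀ i, ‖a i‖ = 1 := fun i => ha i ▸ norm_inv_infDist_smul_sub (hp i).2 (hd i)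
  rw [forall_mem_image_add_iff hxbar, ← sum_mem_orthogonal_iff_sum_cos_eq_zero hnorm]
  refine forall_le_add_iff_mem_orthogonal (f := fun y => ∑ i, infDist y (Ωs i))
    (C := ∑ i, (2 * infDist xbar (Ωs i))⁻¹) L (fun v => ?_) (fun v => ?_)
  · rw [sum_inner, ← sum_add_distrib]
    exact sum_le_sum fun i _ => ha i ▸ le_infDist_add (hcv i) (hp i).1 (hp i).2 v
  · rw [sum_inner, sum_mul, ← sum_add_distrib, ← sum_add_distrib]
    exact sum_le_sum fun i _ => ha i ▸ infDist_add_le (hp i).1 (hp i).2 (hd i) v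

/-- Corollary 3.3: if `Ω` is an affine subspace parallel to a nonzero linear subspace
`L` (i.e. `Ω = av + L`) and `Ωᵢ ∩ Ω = ∅` for all `i`, then `xbar ∈ Ω` is optimal for
the generalized Heron problem iff `∑ i, cos(aᵢ(xbar), u) = 0` for every nonzero
`u ∈ L`, where `aᵢ(xbar) = (xbar - Π(xbar; Ωᵢ)) / d(xbar; Ωᵢ)`. -/
theorem heron_optimal_iff_cos_affine {s n : ℕ}
    (Ω : Set (EuclideanSpace ℝ (Fin s))) (Ωs : Fin n → Set (EuclideanSpace ℝ (Fin s)))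
    (hne : ∀ i, (Ωs i).Nonempty) (hcl : ∀ i, IsClosed (Ωs i)) (hcv : ∀ i, Convex ℝ (Ωs i))
    (L : Submodule ℝ (EuclideanSpace ℝ (Fin s))) (hL : L ≠ ⊥)
    (av : EuclideanSpace ℝ (Fin s))
    (hΩ : Ω = (fun u => av + u) '' (L : Set (EuclideanSpace ℝ (Fin s))))
    (hdisj : ∀ i, Ωs i ∩ Ω = ∅)
    (xbar : EuclideanSpace ℝ (Fin s)) (hxbar : xbar ∈ Ω)
    (p : Fin n → EuclideanSpace ℝ (Fin s))
    (hp : ∀ i, p i ∈ Ωs i ∧ dist xbar (p i) = Metric.infDist xbar (Ωs i))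
    (a : Fin n → EuclideanSpace ℝ (Fin s))
    (ha : ∀ i, a i = (Metric.infDist xbar (Ωs i))⁻¹ • (xbar - p i)) :
    (∀ x ∈ Ω, ∑ i, Metric.infDist xbar (Ωs i) ≤ ∑ i, Metric.infDist x (Ωs i)) ↔
      (∀ u ∈ L, u ≠ 0 → ∑ i, (inner ℝ (a i) u : ℝ) / (‖a i‖ * ‖u‖) = 0) :=
  heron_optimal_iff_cos_affine_general Ω Ωs hcl hcv L av hΩ hdisj xbar hxbar p hp a ha
end

section
/- Let Ω, Ω₁, …, Ωₙ be nonempty closed convex subsets of ℝˢ with Ωᵢ ∩ Ω = ∅ for all i, let x̄ ∈ Ω, and set aᵢ(x̄) = (x̄ − Π(x̄;Ωᵢ))/d(x̄;Ωᵢ). Suppose N(x̄;Ω) = L^⊥ where L = span{u₁, …, u_m} with nonzero vectors u₁, …, u_m. Then x̄ is an optimal solution of the generalized Heron problem (D(x̄) ≤ D(x) for all x ∈ Ω, D(x) = ∑_{i=1}^n d(x;Ωᵢ)) if and only if ∑_{i=1}^n cos(aᵢ(x̄), u_j) = 0 for all j = 1, …, m. -/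
/-!
Each `y ↦ d(y; Ωᵢ)` is bounded below by its affine minorant
`d(x̄; Ωᵢ) + ⟪aᵢ, y - x̄⟫` (the variational inequality of the projection) and above by
`y ↦ ‖y - Π(x̄; Ωᵢ)‖`, which agrees with it at `x̄` and is differentiable there with gradient `aᵢ`.
So `x̄` minimises `D` on the convex set `Ω` iff `⟪∑ aᵢ, y - x̄⟫ ≥ 0` on `Ω`, i.e. iff
`-∑ aᵢ ∈ N(x̄; Ω) = L^⊥`, i.e. iff `∑ᵢ ⟪aᵢ, u_j⟫ = 0` for every `j`; as the `aᵢ` are unit vectors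
(`Ωᵢ ∩ Ω = ∅`), this is the cosine condition.
-/

open Metric Set
open scoped RealInnerProductSpace

section

variable {E : Type*} [NormedAddCommGroup E] [InnerProductSpace ℝ E]

theorem hasFDerivAt_norm_sub_const {x p : E} (hxp : x ≠ p) :
    HasFDerivAt (fun y => ‖y - p‖) (innerSL ℝ (‖x - p‖⁻¹ • (x - p))) x := by
  have hsqrt := ((hasFDerivAt_id x).sub_const p).norm_sq.sqrt (by simpa [sub_eq_zero] using hxp)
  simp only [id, Real.sqrt_sq (norm_nonneg _)] at hsqrt
  convert hsqrt using 1
  ext y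
  simp only [map_smul, map_sub, smul_apply, sub_apply, coe_innerSL_apply, smul_eq_mul, one_div,
    mul_inv_rev, ContinuousLinearMap.comp_id, nsmul_eq_mul, Nat.cast_ofNat]
  field_simp

theorem infDist_add_inner_le_infDist {C : Set E} (hC : Convex ℝ C) {x p : E} (hp : p ∈ C)
    (hxp : dist x p = infDist x C) (y : E) :
    infDist x C + ⟪(infDist x C)⁻¹ • (x - p), y - x⟫ ≤ infDist y C := by
  set d := infDist x C
  set a := d⁻¹ • (x - p)
  have hd : 0 ≤ d := infDist_nonneg
  have hnorm : ‖x - p‖ = d := by rw [← dist_eq_norm, hxp]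
  have hproj : ∀ q ∈ C, ⟪x - p, q - p⟫ ≤ 0 := by
    refine (norm_eq_iInf_iff_real_inner_le_zero hC hp).mp ?_
    simp only [hnorm, d, infDist_eq_iInf, dist_eq_norm]
  have ha_norm : ‖a‖ ≤ 1 := by
    rw [norm_smul, hnorm, Real.norm_of_nonneg (inv_nonneg.mpr hd)]
    exact inv_mul_le_one_of_le₀ le_rfl hd
  have ha_self : ⟪a, x - p⟫ = d := by
    rw [real_inner_smul_left, real_inner_self_eq_norm_sq, hnorm, sq, ← mul_assoc,
      inv_mul_mul_self]
  rw [le_infDist ⟨p, hp⟩]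
  intro q hq
  have ha_proj : 0 ≤ ⟪a, p - q⟫ := by
    rw [real_inner_smul_left, ← neg_sub q p, inner_neg_right]
    exact mul_nonneg (inv_nonneg.mpr hd) (neg_nonneg.mpr (hproj q hq))
  calc d + ⟪a, y - x⟫ ≤ ⟪a, y - x⟫ + ⟪a, x - p⟫ + ⟪a, p - q⟫ := by linarith
    _ = ⟪a, y - q⟫ := by rw [← inner_add_right, ← inner_add_right]; congr 1; abel
    _ ≤ ‖a‖ * ‖y - q‖ := real_inner_le_norm a (y - q)
    _ ≤ dist y q := by
      rw [dist_eq_norm]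
      exact mul_le_of_le_one_left (norm_nonneg _) ha_norm

theorem isMinOn_sum_infDist_iff {ι : Type*} [Fintype ι] {Ω : Set E} (hΩ : Convex ℝ Ω)
    {C : ι → Set E} (hC : ∀ i, Convex ℝ (C i)) {x : E} (hx : x ∈ Ω) {p : ι → E}
    (hp : ∀ i, p i ∈ C i) (hxp : ∀ i, dist x (p i) = infDist x (C i)) (hxC : ∀ i, x ∉ C i) :
    IsMinOn (fun y => ∑ i, infDist y (C i)) Ω x ↔
      ∀ y ∈ Ω, 0 ≤ ⟪∑ i, (infDist x (C i))⁻¹ • (x - p i), y - x⟫ := by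
  set S := ∑ i, (infDist x (C i))⁻¹ • (x - p i)
  constructor
  · intro hmin y hy
    have hS : S = ∑ i, ‖x - p i‖⁻¹ • (x - p i) := by simp only [S, ← hxp, dist_eq_norm]
    have hderiv : HasFDerivAt (fun y => ∑ i, ‖y - p i‖) (innerSL ℝ S) x := by
      rw [hS, map_sum]
      exact HasFDerivAt.fun_sum fun i _ => hasFDerivAt_norm_sub_const fun h => hxC i (h ▸ hp i)
    have hmin_norm : IsMinOn (fun y => ∑ i, ‖y - p i‖) Ω x := by
      intro z hz
      calc ∑ i, ‖x - p i‖ = ∑ i, infDist x (C i) := by simp only [← dist_eq_norm, hxp]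
        _ ≤ ∑ i, infDist z (C i) := hmin hz
        _ ≤ ∑ i, ‖z - p i‖ := Finset.sum_le_sum fun i _ => by
          rw [← dist_eq_norm]; exact infDist_le_dist_of_mem (hp i)
    exact hmin_norm.localize.hasFDerivWithinAt_nonneg hderiv.hasFDerivWithinAt
      (sub_mem_posTangentConeAt_of_segment_subset (hΩ.segment_subset hx hy))
  · intro hS y hy
    calc ∑ i, infDist x (C i) ≤ ∑ i, infDist x (C i) + ⟪S, y - x⟫ :=
          le_add_of_nonneg_right (hS y hy)
      _ = ∑ i, (infDist x (C i) + ⟪(infDist x (C i))⁻¹ • (x - p i), y - x⟫) := by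
        rw [Finset.sum_add_distrib, sum_inner]
      _ ≤ ∑ i, infDist y (C i) := Finset.sum_le_sum fun i _ =>
        infDist_add_inner_le_infDist (hC i) (hp i) (hxp i) y

theorem forall_inner_sub_nonneg_iff_of_normalCone_eq {Ω : Set E} {x : E} {L : Submodule ℝ E}
    (hN : {v | ∀ y ∈ Ω, ⟪v, y - x⟫ ≤ 0} = {v | ∀ w ∈ L, ⟪v, w⟫ = 0}) (S : E) :
    (∀ y ∈ Ω, 0 ≤ ⟪S, y - x⟫) ↔ ∀ w ∈ L, ⟪S, w⟫ = 0 := by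
  simpa only [mem_ofPred_eq, inner_neg_left, neg_nonpos, neg_eq_zero] using
    Set.ext_iff.mp hN (-S)

theorem forall_mem_span_inner_eq_zero_iff {ι : Type*} (u : ι → E) (v : E) :
    (∀ w ∈ Submodule.span ℝ (range u), ⟪v, w⟫ = 0) ↔ ∀ j, ⟪v, u j⟫ = 0 := by
  simpa only [SetLike.le_def, range_subset_iff, LinearMap.mem_ker, SetLike.mem_coe,
    innerₛₗ_apply_apply] using
    Submodule.span_le (p := LinearMap.ker (innerₛₗ ℝ v)) (s := range u)

theorem sum_cos_eq_zero_iff {ι : Type*} [Fintype ι] {a : ι → E} (ha : ∀ i, ‖a i‖ = 1) {u : E}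
    (hu : u ≠ 0) : ∑ i, ⟪a i, u⟫ / (‖a i‖ * ‖u‖) = 0 ↔ ⟪∑ i, a i, u⟫ = 0 := by
  simp [ha, ← Finset.sum_div, sum_inner, hu]

end

theorem heron_optimal_iff_cos_generators_general {s n m : ℕ}
    (Ω : Set (EuclideanSpace ℝ (Fin s))) (Ωs : Fin n → Set (EuclideanSpace ℝ (Fin s)))
    (hΩcv : Convex ℝ Ω) (hcv : ∀ i, Convex ℝ (Ωs i))
    (hdisj : ∀ i, Ωs i ∩ Ω = ∅)
    (xbar : EuclideanSpace ℝ (Fin s)) (hxbar : xbar ∈ Ω)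
    (p : Fin n → EuclideanSpace ℝ (Fin s))
    (hp : ∀ i, p i ∈ Ωs i ∧ dist xbar (p i) = Metric.infDist xbar (Ωs i))
    (a : Fin n → EuclideanSpace ℝ (Fin s))
    (ha : ∀ i, a i = (Metric.infDist xbar (Ωs i))⁻¹ • (xbar - p i))
    (u : Fin m → EuclideanSpace ℝ (Fin s)) (hu : ∀ j, u j ≠ 0)
    (L : Submodule ℝ (EuclideanSpace ℝ (Fin s))) (hLspan : L = Submodule.span ℝ (Set.range u))
    (hN : {v : EuclideanSpace ℝ (Fin s) | ∀ x ∈ Ω, (inner ℝ v (x - xbar) : ℝ) ≤ 0}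
        = {v : EuclideanSpace ℝ (Fin s) | ∀ w ∈ L, (inner ℝ v w : ℝ) = 0}) :
    (∀ x ∈ Ω, ∑ i, Metric.infDist xbar (Ωs i) ≤ ∑ i, Metric.infDist x (Ωs i)) ↔
      (∀ j, ∑ i, (inner ℝ (a i) (u j) : ℝ) / (‖a i‖ * ‖u j‖) = 0) := by
  have hxΩs : ∀ i, xbar ∉ Ωs i := fun i h =>
    eq_empty_iff_forall_notMem.mp (hdisj i) xbar ⟨h, hxbar⟩
  have ha_norm : ∀ i, ‖a i‖ = 1 := fun i => by
    have hxp : xbar - p i ≠ 0 := sub_ne_zero.mpr fun h => hxΩs i (h ▸ (hp i).1)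
    rw [ha i, ← (hp i).2, dist_eq_norm]
    exact norm_smul_inv_norm hxp
  have hopt :=
    isMinOn_sum_infDist_iff hΩcv hcv hxbar (fun i => (hp i).1) (fun i => (hp i).2) hxΩs
  simp only [← ha, isMinOn_iff] at hopt
  rw [hopt, forall_inner_sub_nonneg_iff_of_normalCone_eq hN, hLspan,
    forall_mem_span_inner_eq_zero_iff]
  simp only [sum_cos_eq_zero_iff ha_norm (hu _)]

/-- Corollary 3.4: if `N(xbar; Ω) = L^⊥` where `L = span{u₁, …, u_m}` with nonzero
generators, and `Ωᵢ ∩ Ω = ∅` for all `i`, then `xbar` is optimal for the generalized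
Heron problem iff `∑ i, cos(aᵢ(xbar), u_j) = 0` for all `j = 1, …, m`. -/
theorem heron_optimal_iff_cos_generators {s n m : ℕ}
    (Ω : Set (EuclideanSpace ℝ (Fin s))) (Ωs : Fin n → Set (EuclideanSpace ℝ (Fin s)))
    (hΩne : Ω.Nonempty) (hΩcl : IsClosed Ω) (hΩcv : Convex ℝ Ω)
    (hne : ∀ i, (Ωs i).Nonempty) (hcl : ∀ i, IsClosed (Ωs i)) (hcv : ∀ i, Convex ℝ (Ωs i))
    (hdisj : ∀ i, Ωs i ∩ Ω = ∅)
    (xbar : EuclideanSpace ℝ (Fin s)) (hxbar : xbar ∈ Ω)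
    (p : Fin n → EuclideanSpace ℝ (Fin s))
    (hp : ∀ i, p i ∈ Ωs i ∧ dist xbar (p i) = Metric.infDist xbar (Ωs i))
    (a : Fin n → EuclideanSpace ℝ (Fin s))
    (ha : ∀ i, a i = (Metric.infDist xbar (Ωs i))⁻¹ • (xbar - p i))
    (u : Fin m → EuclideanSpace ℝ (Fin s)) (hu : ∀ j, u j ≠ 0)
    (L : Submodule ℝ (EuclideanSpace ℝ (Fin s))) (hLspan : L = Submodule.span ℝ (Set.range u))
    (hN : {v : EuclideanSpace ℝ (Fin s) | ∀ x ∈ Ω, (inner ℝ v (x - xbar) : ℝ) ≤ 0}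
        = {v : EuclideanSpace ℝ (Fin s) | ∀ w ∈ L, (inner ℝ v w : ℝ) = 0}) :
    (∀ x ∈ Ω, ∑ i, Metric.infDist xbar (Ωs i) ≤ ∑ i, Metric.infDist x (Ωs i)) ↔
      (∀ j, ∑ i, (inner ℝ (a i) (u j) : ℝ) / (‖a i‖ * ‖u j‖) = 0) :=
  heron_optimal_iff_cos_generators_general Ω Ωs hΩcv hcv hdisj xbar hxbar p hp a ha u hu L hLspan hN
end

section
/- Let Ω be a nonempty closed convex subset of ℝˢ and let x̄ ∈ Ω. Then the subdifferential of the distance function d(·;Ω) at x̄ equals N(x̄;Ω) ∩ 𝔹, the intersection of the normal cone to Ω at x̄ with the closed unit ball; that is, a vector v satisfies ⟨v, x − x̄⟩ ≤ d(x;Ω) − d(x̄;Ω) for all x ∈ ℝˢ if and only if ‖v‖ ≤ 1 and ⟨v, x − x̄⟩ ≤ 0 for all x ∈ Ω. -/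
/-!
Since `xbar ∈ Ω`, the subgradient inequality at `xbar` reads `⟪v, x - xbar⟫ ≤ d(x; Ω)`.
Testing it on points of `Ω` gives the normal cone condition, and testing it at `xbar + v`
against the `1`-Lipschitz bound `d(xbar + v; Ω) ≤ ‖v‖` gives `‖v‖ ≤ 1`. Conversely, splitting
`x - xbar = (x - y) + (y - xbar)` for `y ∈ Ω` bounds `⟪v, x - xbar⟫` by `‖x - y‖`, and taking the
infimum over `y` gives `d(x; Ω)`.
-/

open Metric

variable {E : Type*} [NormedAddCommGroup E] [InnerProductSpace ℝ E]

theorem LipschitzWith.norm_le_of_forall_inner_sub_le_sub {f : E → ℝ} {K : NNReal}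
    (hf : LipschitzWith K f) {a v : E} (hv : ∀ x, inner ℝ v (x - a) ≤ f x - f a) : ‖v‖ ≤ K := by
  have hsq : ‖v‖ ^ 2 ≤ K * ‖v‖ :=
    calc ‖v‖ ^ 2 = inner ℝ v (a + v - a) := by
          rw [add_sub_cancel_left, real_inner_self_eq_norm_sq]
      _ ≤ f (a + v) - f a := hv (a + v)
      _ ≤ dist (f (a + v)) (f a) := by rw [Real.dist_eq]; exact le_abs_self _
      _ ≤ K * dist (a + v) a := hf.dist_le_mul _ _
      _ = K * ‖v‖ := by rw [dist_eq_norm, add_sub_cancel_left]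
  nlinarith [norm_nonneg v, K.coe_nonneg]

theorem inner_sub_le_infDist {Ω : Set E} {a v : E} (ha : a ∈ Ω) (hv : ‖v‖ ≤ 1)
    (hN : ∀ y ∈ Ω, inner ℝ v (y - a) ≤ 0) (x : E) : inner ℝ v (x - a) ≤ infDist x Ω :=
  (le_infDist ⟨a, ha⟩).2 fun y hy =>
    calc inner ℝ v (x - a) = inner ℝ v (x - y) + inner ℝ v (y - a) := by
          rw [← inner_add_right, sub_add_sub_cancel]
      _ ≤ ‖v‖ * ‖x - y‖ + 0 := add_le_add (real_inner_le_norm _ _) (hN y hy)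
      _ ≤ dist x y := by
          rw [add_zero, dist_eq_norm]; exact mul_le_of_le_one_left (norm_nonneg _) hv

theorem subdiff_infDist_of_mem_general {s : ℕ}
    (Ω : Set (EuclideanSpace ℝ (Fin s)))
    (xbar : EuclideanSpace ℝ (Fin s)) (hxbar : xbar ∈ Ω) :
    ∀ v : EuclideanSpace ℝ (Fin s),
      (∀ x, (inner ℝ v (x - xbar) : ℝ) ≤ Metric.infDist x Ω - Metric.infDist xbar Ω) ↔
        (‖v‖ ≤ 1 ∧ ∀ x ∈ Ω, (inner ℝ v (x - xbar) : ℝ) ≤ 0) := by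
  intro v
  have hdbar : infDist xbar Ω = 0 := infDist_zero_of_mem hxbar
  constructor
  · intro h
    refine ⟨by exact_mod_cast (lipschitz_infDist_pt Ω).norm_le_of_forall_inner_sub_le_sub h,
      fun x hx => ?_⟩
    simpa [infDist_zero_of_mem hx, hdbar] using h x
  · rintro ⟨hv, hN⟩ x
    rw [hdbar, sub_zero]
    exact inner_sub_le_infDist hxbar hv hN x

/-- Proposition 2.2, case `xbar ∈ Ω`: the subdifferential of the distance function
`d(·; Ω)` at `xbar` equals `N(xbar; Ω) ∩ 𝔹`, the intersection of the normal cone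
with the closed unit ball. -/
theorem subdiff_infDist_of_mem {s : ℕ}
    (Ω : Set (EuclideanSpace ℝ (Fin s)))
    (hne : Ω.Nonempty) (hcl : IsClosed Ω) (hcv : Convex ℝ Ω)
    (xbar : EuclideanSpace ℝ (Fin s)) (hxbar : xbar ∈ Ω) :
    ∀ v : EuclideanSpace ℝ (Fin s),
      (∀ x, (inner ℝ v (x - xbar) : ℝ) ≤ Metric.infDist x Ω - Metric.infDist xbar Ω) ↔
        (‖v‖ ≤ 1 ∧ ∀ x ∈ Ω, (inner ℝ v (x - xbar) : ℝ) ≤ 0) :=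
  subdiff_infDist_of_mem_general Ω xbar hxbar
end
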